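/- Let Ω ⊆ ℕ² be a semilinear set. Then the lower envelope Env(Ω) = (inf { ℓ : (k,ℓ) ∈ Ω })_k is a semi-arithmetic sequence in ℕ ∪ {∞}. -/

import Mathlib

noncomputable def Env (Ω : Set (ℕ × ℕ)) (k : ℕ) : ℕ∞ :=
  sInf {x : ℕ∞ | ∃ ℓ : ℕ, (k, ℓ) ∈ Ω ∧ x = (ℓ : ℕ∞)}

/-- A linear subset of an additive commutative monoid: a translate of a
finitely generated submonoid. -/
def IsLinear {M : Type*} [AddCommMonoid M] (Ω : Set M) : Prop :=
  ∃ v : M, ∃ V : Finset M,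
    Ω = (fun x => v + x) '' (AddSubmonoid.closure (V : Set M) : Set M)

/-- A semilinear set is a finite union of linear sets. -/
def IsSemilinear {M : Type*} [AddCommMonoid M] (Ω : Set M) : Prop :=
  ∃ n : ℕ, ∃ L : Fin n → Set M, (∀ i, IsLinear (L i)) ∧ Ω = ⋃ i, L i

def EvArith (a : ℕ → ℕ∞) (d : ℕ) : Prop :=
  ∃ N : ℕ, ∀ k ≥ N, a (k + 1) = a k + (d : ℕ∞)

def SemiArith (a : ℕ → ℕ∞) (m : ℕ) : Prop :=
  0 < m ∧ ∀ n : ℕ, ∃ d : ℕ, EvArith (fun k => a (m * k + n)) d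

/-!
The envelope of a union is the pointwise minimum of the envelopes, and the minimum of two
eventually arithmetic sequences is eventually arithmetic (the smaller slope wins, unless the
sequence with that slope is eventually `⊤`); refining to a common period, it suffices to treat a
linear set `v + ⟨V⟩`. If no generator has positive first coordinate, the set lies in the column
`k = v.1` and its envelope is eventually `⊤`. Otherwise take a generator `g` of least slope
`g.2 / g.1`: translating by `g` gives `Env (k + g.1) ≤ Env k + g.2`, while every point `(k, ℓ)`
satisfies `g.2 * k ≤ g.1 * (ℓ + C)`. Along each residue class modulo `g.1` the sequence
`Env k + C - (g.2 / g.1) * k` is then nonincreasing in `ℕ∞`, hence eventually constant.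
-/

open Filter

section Sequences

variable {a b : ℕ → ℕ∞} {d e : ℕ}

theorem evArith_iff_eventually : EvArith a d ↔ ∀ᶠ k in atTop, a (k + 1) = a k + d :=
  eventually_atTop.symm

theorem EvArith.congr (h : EvArith a d) (hab : a =ᶠ[atTop] b) : EvArith b d := by
  rw [evArith_iff_eventually] at h ⊢
  filter_upwards [h, hab, (tendsto_add_atTop_nat 1).eventually hab] with k hk hk₀ hk₁
  rw [← hk₀, ← hk₁, hk]

theorem apply_add_eq_add_mul {N : ℕ} (h : ∀ k ≥ N, a (k + 1) = a k + d) {k : ℕ} (hk : N ≤ k)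
    (t : ℕ) : a (k + t) = a k + (d * t : ℕ) := by
  induction t with
  | zero => simp
  | succ t ih =>
    rw [← add_assoc, h _ (by omega), ih]
    push_cast
    ring

theorem EvArith.exists_add_mul (h : EvArith a d) :
    ∃ N, ∀ t, a (N + t) = a N + (d * t : ℕ) := by
  obtain ⟨N, hN⟩ := h
  exact ⟨N, apply_add_eq_add_mul hN le_rfl⟩

theorem EvArith.comp_mul (h : EvArith a d) {c : ℕ} (hc : 0 < c) :
    EvArith (fun k => a (c * k)) (c * d) := by
  obtain ⟨N, hN⟩ := h
  refine ⟨N, fun k hk => ?_⟩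
  simp only [mul_add, mul_one]
  rw [apply_add_eq_add_mul hN (hk.trans (Nat.le_mul_of_pos_left k hc)), mul_comm d]

theorem evArith_of_le_add_of_mul_le {q C : ℕ} (hstep : ∀ j, b (j + 1) ≤ b j + q)
    (hlb : ∀ j, ((q * j : ℕ) : ℕ∞) ≤ b j + C) : EvArith b q := by
  set c : ℕ → ℕ∞ := fun j => b j + C - (q * j : ℕ)
  have hbc : ∀ j, b j + C = c j + (q * j : ℕ) := fun j => (tsub_add_cancel_of_le (hlb j)).symm
  have hc : Antitone c := antitone_nat_of_succ_le fun j => by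
    refine tsub_le_iff_right.2 ?_
    calc b (j + 1) + C ≤ b j + C + q := by rw [add_right_comm]; gcongr; exact hstep j
      _ = c j + (q * (j + 1) : ℕ) := by rw [hbc]; push_cast; ring
  obtain ⟨N, hN⟩ := WellFoundedLT.antitone_chain_condition hc
  refine ⟨N, fun k hk => WithTop.add_right_cancel (ENat.natCast_ne_top C) ?_⟩
  calc b (k + 1) + C = c N + (q * (k + 1) : ℕ) := by rw [hbc, ← hN (k + 1) (by omega)]
    _ = b k + C + q := by rw [hbc, ← hN k hk]; push_cast; ring
    _ = b k + q + C := add_right_comm _ _ _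

theorem EvArith.exists_inf_of_lt (ha : EvArith a d) (hb : EvArith b e) (hde : d < e) :
    ∃ f, EvArith (a ⊓ b) f := by
  obtain ⟨N, hN⟩ := ha.exists_add_mul
  cases hA : a N with
  | top =>
    have : b =ᶠ[atTop] a ⊓ b := by
      filter_upwards [eventually_ge_atTop N] with k hk
      obtain ⟨t, rfl⟩ := Nat.exists_eq_add_of_le hk
      simp [hN, hA]
    exact ⟨e, hb.congr this⟩
  | coe A =>
    obtain ⟨M, hM⟩ := hb.exists_add_mul
    have hb_ge : ∀ k ≥ M, ((e * k : ℕ) : ℕ∞) ≤ b k + (e * M : ℕ) := fun k hk => by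
      obtain ⟨t, rfl⟩ := Nat.exists_eq_add_of_le hk
      rw [hM, add_assoc, mul_add, Nat.cast_add, add_comm (_ : ℕ∞)]
      exact le_add_self
    have : a =ᶠ[atTop] a ⊓ b := by
      filter_upwards [eventually_ge_atTop (N + M + A + e * M)] with k hk
      obtain ⟨t, rfl⟩ := Nat.exists_eq_add_of_le (show N ≤ k by omega)
      refine (inf_eq_left.2 <| (ENat.add_le_add_iff_right (ENat.natCast_ne_top (e * M))).1 ?_).symm
      calc a (N + t) + (e * M : ℕ) = ((A + d * t + e * M : ℕ) : ℕ∞) := by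
            rw [hN, hA]; push_cast; rfl
        _ ≤ ((e * (N + t) : ℕ) : ℕ∞) := by gcongr; nlinarith
        _ ≤ b (N + t) + (e * M : ℕ) := hb_ge _ (by omega)
    exact ⟨d, ha.congr this⟩

theorem EvArith.exists_inf (ha : EvArith a d) (hb : EvArith b e) : ∃ f, EvArith (a ⊓ b) f := by
  rcases lt_trichotomy d e with hde | rfl | hed
  · exact EvArith.exists_inf_of_lt ha hb hde
  · obtain ⟨N, hN⟩ := ha
    obtain ⟨M, hM⟩ := hb
    refine ⟨d, max N M, fun k hk => ?_⟩
    simp only [Pi.inf_apply]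
    rw [hN k (le_of_max_le_left hk), hM k (le_of_max_le_right hk)]
    exact min_add_add_right _ _ _
  · simpa only [inf_comm] using EvArith.exists_inf_of_lt hb ha hed

end Sequences

theorem SemiArith.mul {a : ℕ → ℕ∞} {m : ℕ} (h : SemiArith a m) {c : ℕ} (hc : 0 < c) :
    SemiArith a (m * c) := by
  refine ⟨Nat.mul_pos h.1 hc, fun n => ?_⟩
  obtain ⟨d, hd⟩ := h.2 n
  exact ⟨c * d, by simpa only [mul_assoc, mul_comm c] using hd.comp_mul hc⟩

theorem SemiArith.inf {a b : ℕ → ℕ∞} {m m' : ℕ} (ha : SemiArith a m)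
    (hb : SemiArith b m') : SemiArith (a ⊓ b) (m * m') := by
  refine ⟨Nat.mul_pos ha.1 hb.1, fun n => ?_⟩
  obtain ⟨d, hd⟩ := (ha.mul hb.1).2 n
  obtain ⟨e, he⟩ := (mul_comm m' m ▸ hb.mul ha.1).2 n
  exact hd.exists_inf he

section Envelope

variable {Ω : Set (ℕ × ℕ)} {k ℓ : ℕ}

theorem env_le (h : (k, ℓ) ∈ Ω) : Env Ω k ≤ ℓ :=
  sInf_le ⟨ℓ, h, rfl⟩

theorem env_eq_top_or_exists (Ω : Set (ℕ × ℕ)) (k : ℕ) :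
    Env Ω k = ⊤ ∨ ∃ ℓ, (k, ℓ) ∈ Ω ∧ Env Ω k = ℓ := by
  rcases Set.eq_empty_or_nonempty {x : ℕ∞ | ∃ ℓ : ℕ, (k, ℓ) ∈ Ω ∧ x = ℓ} with h | h
  · exact .inl (by rw [Env, h, sInf_empty])
  · exact .inr (csInf_mem h)

theorem env_eq_top (h : ∀ ℓ, (k, ℓ) ∉ Ω) : Env Ω k = ⊤ := by
  rcases env_eq_top_or_exists Ω k with hk | ⟨ℓ, hℓ, -⟩
  exacts [hk, absurd hℓ (h ℓ)]

theorem env_union (A B : Set (ℕ × ℕ)) : Env (A ∪ B) = Env A ⊓ Env B := by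
  ext1 k
  simp only [Env, Pi.inf_apply, ← sInf_union]
  congr 1
  ext x
  simp only [Set.mem_union, Set.mem_ofPred_eq, ← exists_or, ← or_and_right]

theorem semiArith_env_of_fst_le {K : ℕ} (hΩ : ∀ x ∈ Ω, x.1 ≤ K) : SemiArith (Env Ω) 1 := by
  have htop : ∀ k > K, Env Ω k = ⊤ := fun k hk => env_eq_top fun ℓ hℓ => by
    have := hΩ _ hℓ
    omega
  refine ⟨one_pos, fun n => ⟨0, K + 1, fun k hk => ?_⟩⟩
  simp only [one_mul]
  rw [htop _ (by omega), htop _ (by omega), top_add]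

theorem semiArith_env_of_translate {p q C : ℕ} (hp : 0 < p)
    (htrans : ∀ k ℓ, (k, ℓ) ∈ Ω → (k + p, ℓ + q) ∈ Ω)
    (hslope : ∀ k ℓ, (k, ℓ) ∈ Ω → q * k ≤ p * (ℓ + C)) : SemiArith (Env Ω) p := by
  refine ⟨hp, fun n => ⟨q, evArith_of_le_add_of_mul_le (C := C) (fun j => ?_) (fun j => ?_)⟩⟩
  · rcases env_eq_top_or_exists Ω (p * j + n) with h | ⟨ℓ, hℓ, h⟩
    · simp [h]
    · rw [h, ← Nat.cast_add, show p * (j + 1) + n = p * j + n + p by ring]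
      exact env_le (htrans _ _ hℓ)
  · rcases env_eq_top_or_exists Ω (p * j + n) with h | ⟨ℓ, hℓ, h⟩
    · simp [h]
    · rw [h, ← Nat.cast_add, Nat.cast_le]
      refine Nat.le_of_mul_le_mul_left ?_ hp
      have := hslope _ _ hℓ
      nlinarith

end Envelope

theorem mul_fst_le_mul_snd_of_mem_closure {V : Set (ℕ × ℕ)} {p q : ℕ}
    (hV : ∀ x ∈ V, q * x.1 ≤ p * x.2) {s : ℕ × ℕ} (hs : s ∈ AddSubmonoid.closure V) :
    q * s.1 ≤ p * s.2 := by
  induction hs using AddSubmonoid.closure_induction with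
  | mem x hx => exact hV x hx
  | zero => simp
  | add x y _ _ hx hy =>
    simp only [Prod.fst_add, Prod.snd_add, mul_add]
    omega

theorem exists_semiArith_env_of_isLinear {Ω : Set (ℕ × ℕ)} (hΩ : IsLinear Ω) :
    ∃ m, SemiArith (Env Ω) m := by
  obtain ⟨v, V, rfl⟩ := hΩ
  rcases (V.filter fun x => 0 < x.1).eq_empty_or_nonempty with hV | hV
  · have hV0 : ∀ x ∈ (V : Set (ℕ × ℕ)), 1 * x.1 ≤ 0 * x.2 := fun x hx => by
      simpa using Finset.filter_eq_empty_iff.1 hV hx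
    refine ⟨1, semiArith_env_of_fst_le (K := v.1) ?_⟩
    rintro _ ⟨s, hs, rfl⟩
    simpa using mul_fst_le_mul_snd_of_mem_closure hV0 hs
  obtain ⟨g, hgV, hgmin⟩ :=
    (V.filter fun x => 0 < x.1).exists_min_image (fun x => (x.2 : ℚ) / x.1) hV
  obtain ⟨hg, hg₁⟩ := Finset.mem_filter.1 hgV
  have hVg : ∀ x ∈ (V : Set (ℕ × ℕ)), g.2 * x.1 ≤ g.1 * x.2 := fun x hx => by
    rcases Nat.eq_zero_or_pos x.1 with hx₁ | hx₁
    · simp [hx₁]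
    · have := hgmin x (Finset.mem_filter.2 ⟨hx, hx₁⟩)
      rw [div_le_div_iff₀ (by positivity) (by positivity)] at this
      exact_mod_cast (by linarith : (g.2 : ℚ) * x.1 ≤ g.1 * x.2)
  refine ⟨g.1, semiArith_env_of_translate (q := g.2) (C := g.2 * v.1) hg₁ ?_ ?_⟩
  · rintro k ℓ ⟨s, hs, hvs⟩
    refine ⟨s + g, add_mem hs (AddSubmonoid.subset_closure hg), ?_⟩
    simp only [← add_assoc, hvs]
    rfl
  · rintro k ℓ ⟨s, hs, hvs⟩
    obtain ⟨rfl, rfl⟩ := Prod.mk.inj hvs.symm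
    have := mul_fst_le_mul_snd_of_mem_closure hVg hs
    have := Nat.le_mul_of_pos_left (g.2 * v.1) hg₁
    nlinarith

theorem exists_semiArith_env_biUnion {ι : Type*} (s : Finset ι) {L : ι → Set (ℕ × ℕ)}
    (hL : ∀ i ∈ s, ∃ m, SemiArith (Env (L i)) m) :
    ∃ m, SemiArith (Env (⋃ i ∈ s, L i)) m := by
  classical
  induction s using Finset.induction_on with
  | empty => exact ⟨1, semiArith_env_of_fst_le (K := 0) (by simp)⟩
  | insert i s _ ih =>
    obtain ⟨m, hm⟩ := hL i (Finset.mem_insert_self i s)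
    obtain ⟨m', hm'⟩ := ih fun j hj => hL j (Finset.mem_insert_of_mem hj)
    rw [Finset.set_biUnion_insert, env_union]
    exact ⟨m * m', hm.inf hm'⟩

theorem stmt_9 (Ω : Set (ℕ × ℕ)) (hΩ : IsSemilinear Ω) :
    ∃ m : ℕ, SemiArith (Env Ω) m := by
  obtain ⟨n, L, hL, rfl⟩ := hΩ
  simpa using exists_semiArith_env_biUnion Finset.univ fun i _ =>
    exists_semiArith_env_of_isLinear (hL i)
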